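/- arXiv:1401.3737 — 2 statements merged into one kernel-verified Lean document; each statement's English description precedes it below -/
import Mathlib

section
/- If π lies in the interior of the probability simplex (π_i > 0 for all i), then for every nonzero w ∈ ℝⁿ the expected one-step progress rate satisfies 0 ≤ r(π, w) < 1. -/
open Matrix

/-- The coordinate descent transition map `T_i w = w - (Q_iᵀ w / Q_ii) • e_i`. -/
noncomputable def cdT {n : ℕ} (Q : Matrix (Fin n) (Fin n) ℝ) (i : Fin n)
    (w : Fin n → ℝ) : Fin n → ℝ :=
  w - ((fun j => Q j i) ⬝ᵥ w / Q i i) • (Pi.single i 1 : Fin n → ℝ)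

/-- The quadratic objective `f(w) = (1/2) wᵀ Q w`. -/
noncomputable def cdF {n : ℕ} (Q : Matrix (Fin n) (Fin n) ℝ) (w : Fin n → ℝ) : ℝ :=
  (1/2) * (w ⬝ᵥ Q.mulVec w)


/-- The expected one-step progress rate `r(π, w) = Σ_i π_i f(T_i w) / f(w)`. -/
noncomputable def cdR {n : ℕ} (Q : Matrix (Fin n) (Fin n) ℝ)
    (pi : Fin n → ℝ) (w : Fin n → ℝ) : ℝ :=
  ∑ i, pi i * cdF Q (cdT Q i w) / cdF Q w

/-! For symmetric `Q`, an exact coordinate step lowers `f` by precisely `(Q w)_i ^ 2 / (2 Q_ii)`,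
so every term of `r(π, w)` is at most `π_i` and nonnegative. Positive definiteness makes
`Q w ≠ 0` for `w ≠ 0`, so some coordinate strictly decreases `f`, and since that coordinate
carries positive weight the sum falls strictly below `Σ π_i = 1`. -/

namespace Matrix

variable {n : ℕ} {Q : Matrix (Fin n) (Fin n) ℝ}

lemma IsSymm.col_dotProduct (hQ : Q.IsSymm) (i : Fin n) (w : Fin n → ℝ) :
    (fun j => Q j i) ⬝ᵥ w = (Q *ᵥ w) i := by
  simp only [mulVec, dotProduct, hQ.apply i]

lemma IsSymm.cdF_sub_smul_single (hQ : Q.IsSymm) (w : Fin n → ℝ) (i : Fin n) (c : ℝ) :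
    cdF Q (w - c • Pi.single i 1) = cdF Q w - c * (Q *ᵥ w) i + c ^ 2 / 2 * Q i i := by
  have hcross : w ⬝ᵥ Q.col i = (Q *ᵥ w) i := by
    rw [dotProduct_comm]; exact hQ.col_dotProduct i w
  simp only [cdF, mulVec_sub, mulVec_smul, sub_dotProduct, dotProduct_sub, smul_dotProduct,
    dotProduct_smul, single_one_dotProduct, mulVec_single_one, hcross, col_apply, smul_eq_mul]
  ring

lemma IsSymm.cdF_cdT (hQ : Q.IsSymm) {i : Fin n} (hii : Q i i ≠ 0) (w : Fin n → ℝ) :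
    cdF Q (cdT Q i w) = cdF Q w - (Q *ᵥ w) i ^ 2 / (2 * Q i i) := by
  rw [cdT, hQ.col_dotProduct, hQ.cdF_sub_smul_single]
  field_simp
  ring

lemma IsSymm.cdF_cdT_le (hQ : Q.IsSymm) {i : Fin n} (hii : 0 < Q i i) (w : Fin n → ℝ) :
    cdF Q (cdT Q i w) ≤ cdF Q w := by
  rw [hQ.cdF_cdT hii.ne']
  have : 0 ≤ (Q *ᵥ w) i ^ 2 / (2 * Q i i) := by positivity
  linarith

lemma IsSymm.cdF_cdT_lt (hQ : Q.IsSymm) {i : Fin n} (hii : 0 < Q i i) {w : Fin n → ℝ}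
    (hw : (Q *ᵥ w) i ≠ 0) : cdF Q (cdT Q i w) < cdF Q w := by
  rw [hQ.cdF_cdT hii.ne']
  have : 0 < (Q *ᵥ w) i ^ 2 / (2 * Q i i) := by positivity
  linarith

lemma PosSemidef.cdF_nonneg (hQ : Q.PosSemidef) (w : Fin n → ℝ) : 0 ≤ cdF Q w := by
  have := hQ.dotProduct_mulVec_nonneg w
  rw [star_trivial] at this
  rw [cdF]
  positivity

lemma PosDef.cdF_pos (hQ : Q.PosDef) {w : Fin n → ℝ} (hw : w ≠ 0) : 0 < cdF Q w := by
  have := hQ.dotProduct_mulVec_pos hw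
  rw [star_trivial] at this
  rw [cdF]
  positivity

lemma PosDef.exists_mulVec_ne_zero (hQ : Q.PosDef) {w : Fin n → ℝ} (hw : w ≠ 0) :
    ∃ i, (Q *ᵥ w) i ≠ 0 := by
  by_contra! h
  have := hQ.cdF_pos hw
  simp [cdF, funext h] at this

end Matrix

theorem cdR_nonneg_lt_one_general {n : ℕ}
    (Q : Matrix (Fin n) (Fin n) ℝ) (hQ : Q.PosDef)
    (pi : Fin n → ℝ) (hpi : ∀ i, 0 < pi i) (hsum : ∑ i, pi i = 1)
    (w : Fin n → ℝ) (hw : w ≠ 0) :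
    0 ≤ cdR Q pi w ∧ cdR Q pi w < 1 := by
  have hsymm : Q.IsSymm := isHermitian_iff_isSymm.mp hQ.isHermitian
  have hfw := hQ.cdF_pos hw
  obtain ⟨i₀, hi₀⟩ := hQ.exists_mulVec_ne_zero hw
  refine ⟨Finset.sum_nonneg fun i _ => ?_, ?_⟩
  · have := hQ.posSemidef.cdF_nonneg (cdT Q i w)
    have := hpi i
    positivity
  · calc cdR Q pi w < ∑ i, pi i := by
          refine Finset.sum_lt_sum (fun i _ => ?_) ⟨i₀, Finset.mem_univ _, ?_⟩
          · rw [mul_div_assoc]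
            exact mul_le_of_le_one_right (hpi i).le
              ((div_le_one hfw).mpr (hsymm.cdF_cdT_le hQ.diag_pos w))
          · rw [mul_div_assoc]
            exact mul_lt_of_lt_one_right (hpi i₀)
              ((div_lt_one hfw).mpr (hsymm.cdF_cdT_lt hQ.diag_pos hi₀))
      _ = 1 := hsum

/-- if `π` lies in the interior of the probability simplex
(`π_i > 0` for all `i`), then `0 ≤ r(π, w) < 1` for every nonzero `w`. -/
theorem cdR_nonneg_lt_one {n : ℕ} (hn : 1 ≤ n)
    (Q : Matrix (Fin n) (Fin n) ℝ) (hQ : Q.PosDef)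
    (pi : Fin n → ℝ) (hpi : ∀ i, 0 < pi i) (hsum : ∑ i, pi i = 1)
    (w : Fin n → ℝ) (hw : w ≠ 0) :
    0 ≤ cdR Q pi w ∧ cdR Q pi w < 1 :=
  cdR_nonneg_lt_one_general Q hQ pi hpi hsum w hw
end

section
/- (Lemma 2.) If π lies in the interior of the probability simplex (π_i > 0 for all i), then the supremum U_π = sup{ r(π, w) : w ∈ ℝⁿ, w ≠ 0 } is attained and satisfies U_π < 1; that is, there exists a constant U_π < 1 such that r(π, w) ≤ U_π for all nonzero w, and some nonzero w achieves r(π, w) = U_π. -/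
/-!
The rate `r(π, ·)` is invariant under nonzero scaling and continuous away from `0`, so its
supremum over `w ≠ 0` is its maximum over the compact unit sphere. An exact line search along
`e_i` lowers `f` by `(Qw)_i² / (2 Q_ii)`, whence `r(π, w) = 1 - Σ_i π_i (Qw)_i² / (2 Q_ii f(w))`;
this is `< 1` because `Qw ≠ 0` and every `π_i` is positive.
-/

open Matrix

lemma Matrix.IsSymm.col_dotProduct_s11 {ι R : Type*} [Fintype ι] [CommSemiring R]
    {A : Matrix ι ι R} (hA : A.IsSymm) (i : ι) (v : ι → R) : A.col i ⬝ᵥ v = (A *ᵥ v) i :=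
  congrArg (· ⬝ᵥ v) (funext fun j => hA.apply i j)

theorem exists_forall_ne_zero_le_of_smul_invariant {E : Type*} [NormedAddCommGroup E]
    [NormedSpace ℝ E] [ProperSpace E] [Nontrivial E] {g : E → ℝ}
    (hg : ContinuousOn g {w | w ≠ 0}) (hsmul : ∀ c : ℝ, 0 < c → ∀ w, g (c • w) = g w) :
    ∃ w₀ ≠ 0, ∀ w ≠ 0, g w ≤ g w₀ := by
  have hsphere : Metric.sphere (0 : E) 1 ⊆ {w | w ≠ 0} := fun w hw h => by simp [h] at hw
  obtain ⟨w₀, hw₀, hmax⟩ := (isCompact_sphere (0 : E) 1).exists_isMaxOn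
    (NormedSpace.sphere_nonempty.mpr zero_le_one) (hg.mono hsphere)
  refine ⟨w₀, hsphere hw₀, fun w hw => ?_⟩
  have hnorm : 0 < ‖w‖ := norm_pos_iff.mpr hw
  calc g w = g (‖w‖⁻¹ • w) := (hsmul _ (inv_pos.mpr hnorm) w).symm
    _ ≤ g w₀ := hmax (by simp [norm_smul, hnorm.ne'])

section

variable {n : ℕ} {Q : Matrix (Fin n) (Fin n) ℝ}

lemma cdF_pos (hQ : Q.PosDef) {w : Fin n → ℝ} (hw : w ≠ 0) : 0 < cdF Q w := by
  have h := hQ.dotProduct_mulVec_pos hw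
  rw [star_trivial] at h
  unfold cdF
  positivity

lemma cdF_smul (c : ℝ) (w : Fin n → ℝ) : cdF Q (c • w) = c ^ 2 * cdF Q w := by
  unfold cdF
  rw [mulVec_smul, dotProduct_smul, smul_dotProduct, smul_eq_mul, smul_eq_mul]
  ring

lemma cdT_smul (i : Fin n) (c : ℝ) (w : Fin n → ℝ) : cdT Q i (c • w) = c • cdT Q i w := by
  unfold cdT
  rw [dotProduct_smul, smul_sub, smul_smul, smul_eq_mul, mul_div_assoc]

lemma cdR_smul (pi : Fin n → ℝ) {c : ℝ} (hc : c ≠ 0) (w : Fin n → ℝ) :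
    cdR Q pi (c • w) = cdR Q pi w := by
  unfold cdR
  refine Finset.sum_congr rfl fun i _ => ?_
  rw [cdT_smul, cdF_smul, cdF_smul, mul_left_comm, mul_div_mul_left _ _ (pow_ne_zero 2 hc)]

lemma cdF_sub_smul_single (hQ : Q.IsSymm) (w : Fin n → ℝ) (i : Fin n) (c : ℝ) :
    cdF Q (w - c • Pi.single i 1) = cdF Q w - c * (Q *ᵥ w) i + c ^ 2 / 2 * Q i i := by
  unfold cdF
  simp only [mulVec_sub, mulVec_smul, mulVec_single_one, dotProduct_sub, sub_dotProduct,
    smul_dotProduct, dotProduct_smul, single_dotProduct, col_apply, smul_eq_mul, one_mul]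
  rw [dotProduct_comm w (Q.col i), hQ.col_dotProduct_s11]
  ring

lemma cdF_cdT (hQ : Q.IsSymm) (i : Fin n) (w : Fin n → ℝ) :
    cdF Q (cdT Q i w) = cdF Q w - (Q *ᵥ w) i ^ 2 / (2 * Q i i) := by
  unfold cdT
  rw [← col_apply', hQ.col_dotProduct_s11, cdF_sub_smul_single hQ]
  rcases eq_or_ne (Q i i) 0 with hii | hii
  · simp [hii]
  · field_simp
    ring

lemma cdR_eq_one_sub (hQ : Q.IsSymm) {pi : Fin n → ℝ} (hsum : ∑ i, pi i = 1)
    {w : Fin n → ℝ} (hw : cdF Q w ≠ 0) :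
    cdR Q pi w = 1 - (∑ i, pi i * ((Q *ᵥ w) i ^ 2 / (2 * Q i i))) / cdF Q w := by
  unfold cdR
  simp_rw [cdF_cdT hQ, mul_sub, sub_div, Finset.sum_sub_distrib, ← Finset.sum_div,
    ← Finset.sum_mul, hsum, one_mul, div_self hw]

lemma cdR_lt_one (hQ : Q.PosDef) {pi : Fin n → ℝ} (hpi : ∀ i, 0 < pi i)
    (hsum : ∑ i, pi i = 1) {w : Fin n → ℝ} (hw : w ≠ 0) : cdR Q pi w < 1 := by
  have hf := cdF_pos hQ hw
  have hQw : Q *ᵥ w ≠ 0 := fun h => by simp [cdF, h] at hf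
  obtain ⟨i₀, hi₀⟩ := Function.ne_iff.mp hQw
  have hterm : ∀ i, 0 ≤ pi i * ((Q *ᵥ w) i ^ 2 / (2 * Q i i)) := fun i => by
    have := hQ.diag_pos (i := i)
    have := hpi i
    positivity
  have hpos : 0 < ∑ i, pi i * ((Q *ᵥ w) i ^ 2 / (2 * Q i i)) := by
    refine Finset.sum_pos' (fun i _ => hterm i) ⟨i₀, Finset.mem_univ _, ?_⟩
    have := hQ.diag_pos (i := i₀)
    have := hpi i₀
    have hi : (Q *ᵥ w) i₀ ≠ 0 := hi₀
    positivity
  rw [cdR_eq_one_sub (isHermitian_iff_isSymm.mp hQ.isHermitian) hsum hf.ne']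
  exact sub_lt_self 1 (div_pos hpos hf)

lemma continuousOn_cdR (hQ : Q.PosDef) (pi : Fin n → ℝ) :
    ContinuousOn (cdR Q pi) {w | w ≠ 0} := by
  have hF : Continuous (cdF Q) := by unfold cdF; fun_prop
  have hT : ∀ i, Continuous (cdT Q i) := fun i => by unfold cdT; fun_prop
  unfold cdR
  refine continuousOn_finsetSum _ fun i _ => ?_
  exact (continuous_const.mul (hF.comp (hT i))).continuousOn.div hF.continuousOn
    fun w hw => (cdF_pos hQ hw).ne'

end

/-- Lemma 2: if `π` lies in the interior of the probability
simplex, then the supremum `U_π = sup { r(π, w) : w ≠ 0 }` is attained and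
satisfies `U_π < 1`: there is a constant `U_π < 1` with `r(π, w) ≤ U_π` for all
nonzero `w`, and some nonzero `w` achieves `r(π, w) = U_π`. -/
theorem cdR_sup_attained_lt_one {n : ℕ} (hn : 1 ≤ n)
    (Q : Matrix (Fin n) (Fin n) ℝ) (hQ : Q.PosDef)
    (pi : Fin n → ℝ) (hpi : ∀ i, 0 < pi i) (hsum : ∑ i, pi i = 1) :
    ∃ U : ℝ, U < 1 ∧ (∀ w : Fin n → ℝ, w ≠ 0 → cdR Q pi w ≤ U) ∧
      (∃ w : Fin n → ℝ, w ≠ 0 ∧ cdR Q pi w = U) := by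
  have : Nonempty (Fin n) := ⟨⟨0, hn⟩⟩
  obtain ⟨w₀, hw₀, hmax⟩ := exists_forall_ne_zero_le_of_smul_invariant (continuousOn_cdR hQ pi)
    fun c hc => cdR_smul pi hc.ne'
  exact ⟨cdR Q pi w₀, cdR_lt_one hQ hpi hsum hw₀, hmax, w₀, hw₀, rfl⟩
end
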